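/- arXiv:1710.05739 — 6 statements merged into one kernel-verified Lean document; each statement's English description precedes it below -/
import Mathlib

section
/- For every pair of inventory levels i, j ∈ {0,…,D}, defining vectors v_i ∈ ℝ^{i+1} by v_i(k) = h·i − (h+b)(k−1) for k ∈ {1,…,i+1} (and v_j analogously), one has v_i(min(i,d)+1) − v_j(min(j,d)+1) = c(i,d) − c(j,d) for every demand d ∈ {0,…,D}. -/
/-- Newsvendor cost `c(i,d) = h·(i−d)⁺ + b·(d−i)⁺`. -/
noncomputable def newsCost (h b : ℝ) (i d : ℕ) : ℝ :=
  h * max ((i : ℝ) - d) 0 + b * max ((d : ℝ) - i) 0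

/-- The vector `v_i` with `v_i(k) = h·i − (h+b)(k−1)` for `k ∈ {1,…,i+1}`. -/
noncomputable def vVec (h b : ℝ) (i k : ℕ) : ℝ :=
  h * i - (h + b) * ((k : ℝ) - 1)

lemma vVec_eq (h b : ℝ) (i d : ℕ) :
    vVec h b i (min i d + 1) = newsCost h b i d - b * d := by
  unfold vVec newsCost
  rcases le_total i d with hid | hid
  · rw [min_eq_left hid]
    rw [max_eq_right (by simp [hid] : (i:ℝ) - d ≤ 0),
        max_eq_left (by simp [hid] : (0:ℝ) ≤ (d:ℝ) - i)]
    push_cast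
    ring
  · rw [min_eq_right hid]
    rw [max_eq_left (by simp [hid] : (0:ℝ) ≤ (i:ℝ) - d),
        max_eq_right (by simp [hid] : (d:ℝ) - i ≤ 0)]
    push_cast
    ring

theorem stmt_1 (D : ℕ) (h b : ℝ) (hh : 0 < h) (hb : 0 < b) :
    ∀ i ≤ D, ∀ j ≤ D, ∀ d ≤ D,
      vVec h b i (min i d + 1) - vVec h b j (min j d + 1) =
        newsCost h b i d - newsCost h b j d := by
  intro i _ j _ d _
  rw [vVec_eq, vVec_eq]
  ring
end

section
/- Under the same setup, the estimator is unbiased for cost differences: E[ĉ(i) − ĉ(j)] = c(i,d) − c(j,d) for all i, j ∈ 𝓘, where c is the newsvendor cost and φ(i) = h·i − (h+b)·min(i,d). -/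
open Finset

theorem stmt_6 {Ω : Type*} [Fintype Ω]
    (w : Ω → ℝ) (hw : ∀ ω, 0 ≤ w ω) (hsum : ∑ ω, w ω = 1)
    (h b : ℝ) (hh : 0 < h) (hb : 0 < b) (D : ℕ) (hD : 0 < D) (d : ℕ) (hd : d ≤ D)
    (β : ℝ) (hβ : β = (D : ℝ) * max h b)
    (φ : ℕ → ℝ) (hφ : ∀ i, φ i = h * i - (h + b) * (min i d : ℕ))
    (𝓘 : Finset ℕ) (h𝓘 : ∀ i ∈ 𝓘, i ≤ D)
    (I : Ω → ℕ) (hI : ∀ ω, I ω ∈ 𝓘)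
    (P : ℕ → ℝ) (hP : ∀ i, P i = ∑ ω, if i ≤ I ω then w ω else 0)
    (hPpos : ∀ i ∈ 𝓘, 0 < P i)
    (chat : ℕ → Ω → ℝ)
    (hchat : ∀ i ω, chat i ω = (if i ≤ I ω then (1 : ℝ) else 0) * (φ i + β) / P i) :
    ∀ i ∈ 𝓘, ∀ j ∈ 𝓘,
      (∑ ω, w ω * (chat i ω - chat j ω)) = newsCost h b i d - newsCost h b j d := by
  have key : ∀ i ∈ 𝓘, (∑ ω, w ω * chat i ω) = φ i + β := by
    intro i hi
    have hne : P i ≠ 0 := (hPpos i hi).ne'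
    have : (∑ ω, w ω * chat i ω) = (∑ ω, if i ≤ I ω then w ω else 0) * ((φ i + β) / P i) := by
      rw [Finset.sum_mul]
      refine Finset.sum_congr rfl fun ω _ => ?_
      rw [hchat]
      by_cases hle : i ≤ I ω <;> simp [hle] <;> ring
    rw [this, ← hP, div_eq_mul_inv, ← mul_assoc]
    field_simp
  have cost : ∀ i, newsCost h b i d = φ i + b * d := by
    intro i
    rw [hφ, newsCost]
    rcases le_total i d with hle | hle
    · rw [min_eq_left hle]
      have h1 : ((i : ℝ) - d) ≤ 0 := by
        have : (i : ℝ) ≤ d := Nat.cast_le.mpr hle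
        linarith
      have h2 : (0 : ℝ) ≤ (d : ℝ) - i := by
        have : (i : ℝ) ≤ d := Nat.cast_le.mpr hle
        linarith
      rw [max_eq_right h1, max_eq_left h2]
      ring
    · rw [min_eq_right hle]
      have h1 : (0 : ℝ) ≤ (i : ℝ) - d := by
        have : (d : ℝ) ≤ i := Nat.cast_le.mpr hle
        linarith
      have h2 : ((d : ℝ) - i) ≤ 0 := by
        have : (d : ℝ) ≤ i := Nat.cast_le.mpr hle
        linarith
      rw [max_eq_left h1, max_eq_right h2]
      ring
  intro i hi j hj
  have : (∑ ω, w ω * (chat i ω - chat j ω)) =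
      (∑ ω, w ω * chat i ω) - (∑ ω, w ω * chat j ω) := by
    rw [← Finset.sum_sub_distrib]
    refine Finset.sum_congr rfl fun ω _ => ?_
    ring
  rw [this, key i hi, key j hj, cost i, cost j]
  ring
end

section
/- Let p₁,…,p_N be nonnegative reals summing to at most 1 with p_i ≥ γ/N for all i, where 0 < γ < 1. Then the sum over i of p_i / (Σ_{j ≥ i} p_j) is at most 2·log(N³/γ + N + 2) + 2. -/
open Finset

lemma tele_aux (g : ℕ → ℝ) : ∀ m : ℕ, ∑ i ∈ Finset.Icc 1 m, (g i - g (i+1)) = g 1 - g (m+1) := by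
  intro m
  induction m with
  | zero => simp
  | succ k ih =>
    rw [Finset.sum_Icc_succ_top (by omega : 1 ≤ k + 1), ih]
    ring

theorem stmt_8 (N : ℕ) (hN : 1 ≤ N) (γ : ℝ) (hγ0 : 0 < γ) (hγ1 : γ < 1)
    (p : ℕ → ℝ) (hp0 : ∀ i ∈ Finset.Icc 1 N, 0 ≤ p i)
    (hplb : ∀ i ∈ Finset.Icc 1 N, γ / N ≤ p i)
    (hpsum : ∑ i ∈ Finset.Icc 1 N, p i ≤ 1) :
    ∑ i ∈ Finset.Icc 1 N, p i / (∑ j ∈ Finset.Icc i N, p j) ≤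
      2 * Real.log ((N : ℝ) ^ 3 / γ + N + 2) + 2 := by
  set T : ℕ → ℝ := fun i => ∑ j ∈ Finset.Icc i N, p j with hTdef
  have hNpos : (0 : ℝ) < N := by exact_mod_cast hN
  have hγN : 0 < γ / N := div_pos hγ0 hNpos
  have hT : ∀ i, 1 ≤ i → i ≤ N → γ / N ≤ T i := by
    intro i h1 h2
    calc γ / N ≤ p N := hplb N (by simp [hN])
      _ ≤ T i := Finset.single_le_sum
          (fun j hj => hp0 j (by simp only [mem_Icc] at hj ⊢; omega))
          (by simp [h2])
  have hTpos : ∀ i, 1 ≤ i → i ≤ N → 0 < T i := fun i h1 h2 => lt_of_lt_of_le hγN (hT i h1 h2)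
  have hsplit : ∀ i, 1 ≤ i → i ≤ N → T i = p i + T (i+1) := by
    intro i h1 h2
    have hins : Finset.Icc i N = insert i (Finset.Icc (i+1) N) := by
      ext x; simp only [mem_Icc, Finset.mem_insert]; omega
    show (∑ j ∈ Finset.Icc i N, p j) = p i + ∑ j ∈ Finset.Icc (i+1) N, p j
    rw [hins, Finset.sum_insert (by simp only [Finset.mem_Icc]; omega)]
  have hterm : ∀ i, 1 ≤ i → i + 1 ≤ N →
      p i / T i ≤ Real.log (T i) - Real.log (T (i+1)) := by
    intro i h1 h2
    have hb : 0 < T i := hTpos i h1 (by omega)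
    have ha : 0 < T (i+1) := hTpos (i+1) (by omega) h2
    have key : Real.log (T (i+1) / T i) ≤ T (i+1) / T i - 1 :=
      Real.log_le_sub_one_of_pos (by positivity)
    rw [Real.log_div ha.ne' hb.ne'] at key
    have heq : T (i+1) / T i - 1 = -(p i / T i) := by
      have hs := hsplit i h1 (by omega)
      field_simp
      linarith
    rw [heq] at key
    linarith
  obtain ⟨M, rfl⟩ : ∃ M, N = M + 1 := ⟨N - 1, by omega⟩
  rw [Finset.sum_Icc_succ_top (by omega : 1 ≤ M + 1)]
  have hlast : p (M+1) / T (M+1) = 1 := by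
    have : T (M+1) = p (M+1) := by simp [hTdef]
    have hppos : 0 < p (M+1) := this ▸ hTpos (M+1) (by omega) le_rfl
    rw [this, div_self hppos.ne']
  have hsum1 : ∑ i ∈ Finset.Icc 1 M, p i / T i ≤
      ∑ i ∈ Finset.Icc 1 M, (Real.log (T i) - Real.log (T (i+1))) := by
    apply Finset.sum_le_sum
    intro i hi
    simp only [mem_Icc] at hi
    exact hterm i hi.1 (by omega)
  rw [tele_aux (fun i => Real.log (T i)) M] at hsum1
  have hT1 : Real.log (T 1) ≤ 0 := Real.log_nonpos (hTpos 1 le_rfl (by omega)).le hpsum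
  have hTN : Real.log (γ / ((M:ℝ)+1)) ≤ Real.log (T (M+1)) := by
    have hc : γ / (((M+1:ℕ)):ℝ) = γ / ((M:ℝ)+1) := by push_cast; ring
    rw [← hc]
    exact Real.log_le_log hγN (hT (M+1) (by omega) le_rfl)
  set X : ℝ := ((M:ℝ)+1) ^ 3 / γ + ((M:ℝ)+1) + 2 with hX
  have hXcast : ((M+1 : ℕ) : ℝ) = (M:ℝ) + 1 := by push_cast; ring
  have hM1 : (1:ℝ) ≤ (M:ℝ)+1 := by have := Nat.cast_nonneg (α:=ℝ) M; linarith
  have hX3 : (3:ℝ) ≤ X := by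
    have : 0 ≤ ((M:ℝ)+1)^3 / γ := by positivity
    simp only [hX]; nlinarith
  have hlogX : 0 ≤ Real.log X := Real.log_nonneg (by linarith)
  have hmono : ((M:ℝ)+1)/γ ≤ X := by
    have hM0 : (0:ℝ) ≤ (M:ℝ) := Nat.cast_nonneg M
    have h3 : ((M:ℝ)+1) ≤ ((M:ℝ)+1)^3 := by nlinarith [sq_nonneg (M:ℝ)]
    have h4 : ((M:ℝ)+1)/γ ≤ ((M:ℝ)+1)^3/γ := (div_le_div_iff_of_pos_right hγ0).mpr h3
    simp only [hX]; linarith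
  have hlog2 : -Real.log (γ / ((M:ℝ)+1)) ≤ Real.log X := by
    rw [← Real.log_inv]
    apply Real.log_le_log (by positivity)
    rw [inv_div]
    exact hmono
  rw [hlast]
  have hgoal : 2 * Real.log (((M+1:ℕ):ℝ) ^ 3 / γ + ((M+1:ℕ):ℝ) + 2) + 2 = 2 * Real.log X + 2 := by
    rw [hXcast, hX]
  push_cast [hXcast] at hgoal ⊢
  linarith [hsum1, hT1, hTN, hlogX, hlog2]
end

section
/- Combining the potential bounds: if losses ℓ_i(t) ≥ 0, weights evolve as W_i(t) = W_i(t−1)·exp(−η·ℓ_i(t)) with W_i(0) = 1, and q_i(t) = W_i(t−1)/W(t−1), then for every i* ∈ {1,…,N}: Σ_{t=1}^{T} Σ_i q_i(t)·ℓ_i(t) − Σ_{t=1}^{T} ℓ_{i*}(t) ≤ (log N)/η + (η/2)·Σ_{t=1}^{T} Σ_i q_i(t)·ℓ_i(t)². -/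
/-!
The potential `Φ(t) = log W(t)` decreases in round `t` by at least the learner's loss `η ∑ᵢ qᵢ(t) ℓᵢ(t)`,
up to the second-order term `η²/2 ∑ᵢ qᵢ(t) ℓᵢ(t)²`: this follows from `e⁻ˣ ≤ 1 - x + x²/2` for `x ≥ 0`
and `log y ≤ y - 1`. Summing over the rounds bounds `Φ(T) - Φ(0)` from above, while `Φ(0) = log N` and
`Φ(T) ≥ log W_{i*}(T) = -η ∑ₜ ℓ_{i*}(t)` bound it from below.
-/

open Finset Real

theorem Real.exp_neg_le_one_sub_add_sq_div_two {x : ℝ} (hx : 0 ≤ x) :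
    exp (-x) ≤ 1 - x + x ^ 2 / 2 := by
  let f : ℝ → ℝ := fun y ↦ 1 - y + y ^ 2 / 2 - exp (-y)
  have hf : ∀ y, HasDerivAt f (y - 1 + exp (-y)) y := fun y ↦
    ((((hasDerivAt_id y).const_sub 1).add ((hasDerivAt_pow 2 y).div_const 2)).sub
      (hasDerivAt_neg y).exp).congr_deriv (by norm_num; ring)
  have hmono : Monotone f := monotone_of_hasDerivAt_nonneg hf fun y ↦ by
    have := one_sub_le_exp_neg y
    simp only [Pi.zero_apply]
    linarith
  have := hmono hx
  simp only [f, neg_zero, exp_zero] at this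
  linarith

theorem Real.log_sum_mul_exp_neg_le {ι : Type*} (s : Finset ι) {q x : ι → ℝ} {η : ℝ}
    (hη : 0 ≤ η) (hq : ∀ i ∈ s, 0 ≤ q i) (hq_sum : ∑ i ∈ s, q i = 1) (hx : ∀ i ∈ s, 0 ≤ x i) :
    log (∑ i ∈ s, q i * exp (-η * x i)) ≤
      -η * ∑ i ∈ s, q i * x i + η ^ 2 / 2 * ∑ i ∈ s, q i * x i ^ 2 := by
  have hpos : 0 < ∑ i ∈ s, q i * exp (-η * x i) := by
    obtain ⟨j, hj, hqj⟩ := (sum_pos_iff_of_nonneg hq).1 (hq_sum ▸ one_pos)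
    exact sum_pos' (fun i hi ↦ mul_nonneg (hq i hi) (exp_pos _).le)
      ⟨j, hj, mul_pos hqj (exp_pos _)⟩
  calc log (∑ i ∈ s, q i * exp (-η * x i))
      ≤ ∑ i ∈ s, q i * exp (-η * x i) - 1 := log_le_sub_one_of_pos hpos
    _ ≤ ∑ i ∈ s, q i * (1 - η * x i + (η * x i) ^ 2 / 2) - 1 := by
      gcongr with i hi
      · exact hq i hi
      · simpa [neg_mul] using exp_neg_le_one_sub_add_sq_div_two (mul_nonneg hη (hx i hi))
    _ = -η * ∑ i ∈ s, q i * x i + η ^ 2 / 2 * ∑ i ∈ s, q i * x i ^ 2 := by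
      have hexpand : ∀ i, q i * (1 - η * x i + (η * x i) ^ 2 / 2) =
          q i - η * (q i * x i) + η ^ 2 / 2 * (q i * x i ^ 2) := fun i ↦ by ring
      simp only [hexpand, sum_add_distrib, sum_sub_distrib, ← mul_sum, hq_sum]
      ring

theorem eq_exp_sum_Icc_of_eq_mul_exp {f g : ℕ → ℝ} (h0 : f 0 = 1)
    (hrec : ∀ t ≥ 1, f t = f (t - 1) * exp (g t)) (t : ℕ) :
    f t = exp (∑ s ∈ Icc 1 t, g s) := by
  induction t with
  | zero => simp [h0]
  | succ t ih => rw [hrec (t + 1) (by omega), Nat.add_sub_cancel, ih, sum_Icc_succ_top (by omega),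
      exp_add]

theorem sub_le_sum_Icc_of_sub_le {f g : ℕ → ℝ} (h : ∀ t ≥ 1, f t - f (t - 1) ≤ g t) (T : ℕ) :
    f T - f 0 ≤ ∑ t ∈ Icc 1 T, g t := by
  induction T with
  | zero => simp
  | succ T ih =>
    have hstep := h (T + 1) (by omega)
    rw [Nat.add_sub_cancel] at hstep
    rw [sum_Icc_succ_top (by omega)]
    linarith

theorem stmt_12_general (N T : ℕ) (η : ℝ) (hη : 0 < η)
    (ℓ : ℕ → ℕ → ℝ) (hℓ : ∀ i t, 0 ≤ ℓ i t)
    (W : ℕ → ℕ → ℝ) (hW0 : ∀ i, W i 0 = 1)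
    (hWrec : ∀ i, ∀ t ≥ 1, W i t = W i (t - 1) * Real.exp (-η * ℓ i t))
    (Wtot : ℕ → ℝ) (hWtot : ∀ t, Wtot t = ∑ i ∈ Finset.range N, W i t)
    (q : ℕ → ℕ → ℝ) (hq : ∀ i t, q i t = W i (t - 1) / Wtot (t - 1))
    (istar : ℕ) (histar : istar ∈ Finset.range N) :
    ∑ t ∈ Finset.Icc 1 T, ∑ i ∈ Finset.range N, q i t * ℓ i t -
        ∑ t ∈ Finset.Icc 1 T, ℓ istar t ≤
      Real.log N / η +
        η / 2 * ∑ t ∈ Finset.Icc 1 T, ∑ i ∈ Finset.range N, q i t * (ℓ i t) ^ 2 := by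
  have hW : ∀ i t, W i t = exp (∑ s ∈ Icc 1 t, -η * ℓ i s) := fun i ↦
    eq_exp_sum_Icc_of_eq_mul_exp (hW0 i) (hWrec i)
  have hWtot_pos : ∀ t, 0 < Wtot t := fun t ↦
    hWtot t ▸ sum_pos (fun i _ ↦ hW i t ▸ exp_pos _) ⟨istar, histar⟩
  have hstep : ∀ t ≥ 1, log (Wtot t) - log (Wtot (t - 1)) ≤
      -η * ∑ i ∈ range N, q i t * ℓ i t + η ^ 2 / 2 * ∑ i ∈ range N, q i t * ℓ i t ^ 2 := by
    intro t ht
    have hratio : Wtot t / Wtot (t - 1) = ∑ i ∈ range N, q i t * exp (-η * ℓ i t) := by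
      simp only [hq, div_mul_eq_mul_div, ← sum_div, ← hWrec _ t ht, hWtot]
    rw [← log_div (hWtot_pos t).ne' (hWtot_pos _).ne', hratio]
    refine log_sum_mul_exp_neg_le _ hη.le (fun i _ ↦ ?_) ?_ fun i _ ↦ hℓ i t
    · rw [hq]; exact div_nonneg (hW i _ ▸ (exp_pos _).le) (hWtot_pos _).le
    · simp only [hq, ← sum_div, ← hWtot, div_self (hWtot_pos _).ne']
  have hupper := sub_le_sum_Icc_of_sub_le hstep T
  have hlower : -η * ∑ t ∈ Icc 1 T, ℓ istar t ≤ log (Wtot T) := by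
    have := log_le_log (hW istar T ▸ exp_pos _)
      (hWtot T ▸ single_le_sum (fun i _ ↦ hW i T ▸ (exp_pos _).le) histar)
    rwa [hW, log_exp, ← mul_sum] at this
  have hinit : log (Wtot 0) = log N := by simp [hWtot, hW0]
  rw [sum_add_distrib, ← mul_sum, ← mul_sum, hinit] at hupper
  rw [div_add' _ _ _ hη.ne', le_div_iff₀ hη]
  linarith

theorem stmt_12 (N T : ℕ) (hN : 1 ≤ N) (η : ℝ) (hη : 0 < η)
    (ℓ : ℕ → ℕ → ℝ) (hℓ : ∀ i t, 0 ≤ ℓ i t)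
    (W : ℕ → ℕ → ℝ) (hW0 : ∀ i, W i 0 = 1)
    (hWrec : ∀ i, ∀ t ≥ 1, W i t = W i (t - 1) * Real.exp (-η * ℓ i t))
    (Wtot : ℕ → ℝ) (hWtot : ∀ t, Wtot t = ∑ i ∈ Finset.range N, W i t)
    (q : ℕ → ℕ → ℝ) (hq : ∀ i t, q i t = W i (t - 1) / Wtot (t - 1))
    (istar : ℕ) (histar : istar ∈ Finset.range N) :
    ∑ t ∈ Finset.Icc 1 T, ∑ i ∈ Finset.range N, q i t * ℓ i t -
        ∑ t ∈ Finset.Icc 1 T, ℓ istar t ≤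
      Real.log N / η +
        η / 2 * ∑ t ∈ Finset.Icc 1 T, ∑ i ∈ Finset.range N, q i t * (ℓ i t) ^ 2 :=
  stmt_12_general N T η hη ℓ hℓ W hW0 hWrec Wtot hWtot q hq istar histar
end

section
/- Fix weights W_i(t) evolving by the Fixed-Share update W_i(t) = W_i(t−1)·exp(−η·ℓ_i(t)) + (α/N)·Σ_j W_j(t−1), with ℓ_i(t) ≥ 0, α > 0, η > 0. Then for any action j and any time interval (T₀, T₁] with T₁ > T₀ + 1: W_j(T₁) ≥ (α/N)·W(T₀)·exp(−η·Σ_{t=T₀+1}^{T₁} ℓ_j(t)), where W(t) = Σ_i W_i(t). -/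
open Finset

theorem stmt_14 (N : ℕ) (hN : 1 ≤ N) (η α : ℝ) (hη : 0 < η) (hα : 0 < α)
    (ℓ : ℕ → ℕ → ℝ) (hℓ : ∀ i t, 0 ≤ ℓ i t)
    (W : ℕ → ℕ → ℝ)
    (hWnonneg : ∀ i t, 0 ≤ W i t)
    (hWrec : ∀ i ∈ Finset.range N, ∀ t ≥ 1,
      W i t = W i (t - 1) * Real.exp (-η * ℓ i t) +
        α / N * ∑ j ∈ Finset.range N, W j (t - 1))
    (Wtot : ℕ → ℝ) (hWtot : ∀ t, Wtot t = ∑ i ∈ Finset.range N, W i t)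
    (j : ℕ) (hj : j ∈ Finset.range N) (T₀ T₁ : ℕ) (hT : T₀ + 1 < T₁) :
    W j T₁ ≥ α / N * Wtot T₀ *
      Real.exp (-η * ∑ t ∈ Finset.Icc (T₀ + 1) T₁, ℓ j t) := by
  have hαN : 0 ≤ α / N := by positivity
  have hS : 0 ≤ Wtot T₀ := by
    rw [hWtot]; exact Finset.sum_nonneg fun i _ => hWnonneg i T₀
  have key : ∀ T, T₀ + 1 ≤ T → W j T ≥ α / N * Wtot T₀ *
      Real.exp (-η * ∑ t ∈ Finset.Icc (T₀ + 1) T, ℓ j t) := by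
    intro T hT
    induction T, hT using Nat.le_induction with
    | base =>
      have h := hWrec j hj (T₀ + 1) (by omega)
      simp only [Nat.add_sub_cancel] at h
      rw [Finset.Icc_self, Finset.sum_singleton]
      have h1 : α / N * Wtot T₀ * Real.exp (-η * ℓ j (T₀ + 1)) ≤ α / N * Wtot T₀ := by
        nlinarith [Real.exp_le_one_iff.mpr (by nlinarith [hℓ j (T₀+1)] : -η * ℓ j (T₀+1) ≤ 0),
          Real.exp_pos (-η * ℓ j (T₀+1)), mul_nonneg hαN hS]
      have h2 : α / N * Wtot T₀ ≤ W j (T₀ + 1) := by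
        rw [h, hWtot]
        have := mul_nonneg (hWnonneg j T₀) (Real.exp_pos (-η * ℓ j (T₀+1))).le
        linarith
      linarith
    | succ n hn ih =>
      have h := hWrec j hj (n + 1) (by omega)
      simp only [Nat.add_sub_cancel] at h
      rw [Finset.sum_Icc_succ_top (by omega), mul_add, Real.exp_add, ← mul_assoc, ge_iff_le]
      have hnn : 0 ≤ α / N * ∑ i ∈ Finset.range N, W i n := by
        exact mul_nonneg hαN (Finset.sum_nonneg fun i _ => hWnonneg i n)
      have hmul := mul_le_mul_of_nonneg_right ih (Real.exp_pos (-η * ℓ j (n+1))).le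
      rw [h]
      calc α / N * Wtot T₀ * Real.exp (-η * ∑ t ∈ Finset.Icc (T₀ + 1) n, ℓ j t) *
            Real.exp (-η * ℓ j (n + 1))
          ≤ W j n * Real.exp (-η * ℓ j (n + 1)) := hmul
        _ ≤ W j n * Real.exp (-η * ℓ j (n + 1)) + α / N * ∑ i ∈ Finset.range N, W i n := by
            linarith
  exact key T₁ (by omega)
end

section
/- The difference in estimated costs satisfies a conditional variance decomposition: with ĉ(i) = 𝟙[I ≥ i]·(φ(i) + β)/P(I ≥ i) for a random I with P(I ≥ i) > 0, the weighted sum Σ_{i ∈ 𝓘} P(I = i)·E[ĉ(i)²] ≤ 4β²·Σ_{i ∈ 𝓘} P(I = i)/P(I ≥ i). -/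
open Finset

theorem stmt_19 {Ω : Type*} [Fintype Ω]
    (w : Ω → ℝ) (hw : ∀ ω, 0 ≤ w ω) (hsum : ∑ ω, w ω = 1)
    (𝓘 : Finset ℕ) (I : Ω → ℕ) (hI : ∀ ω, I ω ∈ 𝓘)
    (P Ptail : ℕ → ℝ)
    (hPt : ∀ i, P i = ∑ ω, if I ω = i then w ω else 0)
    (hPtail : ∀ i, Ptail i = ∑ ω, if i ≤ I ω then w ω else 0)
    (hPpos : ∀ i ∈ 𝓘, 0 < Ptail i)
    (φ : ℕ → ℝ) (β : ℝ) (hβ : 0 < β) (hφ : ∀ i ∈ 𝓘, |φ i| ≤ β)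
    (chat : ℕ → Ω → ℝ)
    (hchat : ∀ i ω, chat i ω = (if i ≤ I ω then (1 : ℝ) else 0) * (φ i + β) / Ptail i) :
    ∑ i ∈ 𝓘, P i * (∑ ω, w ω * (chat i ω) ^ 2) ≤
      4 * β ^ 2 * ∑ i ∈ 𝓘, P i / Ptail i := by
  rw [Finset.mul_sum]
  apply Finset.sum_le_sum
  intro i hi
  have hpt := hPpos i hi
  have hP0 : 0 ≤ P i := by
    rw [hPt]
    exact Finset.sum_nonneg fun ω _ => by split_ifs with h; exacts [hw ω, le_refl 0]
  have hE : ∑ ω, w ω * (chat i ω) ^ 2 = (φ i + β) ^ 2 / Ptail i := by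
    have h1 : ∀ ω : Ω, w ω * (chat i ω) ^ 2
        = (if i ≤ I ω then w ω else 0) * ((φ i + β) ^ 2 / (Ptail i) ^ 2) := by
      intro ω
      rw [hchat]
      split_ifs <;> ring
    rw [Finset.sum_congr rfl fun ω _ => h1 ω, ← Finset.sum_mul, ← hPtail]
    field_simp
  rw [hE]
  have hb : (φ i + β) ^ 2 ≤ 4 * β ^ 2 := by
    have h2 := hφ i hi
    have h3 := abs_le.mp h2
    nlinarith [h3.1, h3.2]
  have : P i * ((φ i + β) ^ 2 / Ptail i) ≤ P i * (4 * β ^ 2 / Ptail i) := by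
    apply mul_le_mul_of_nonneg_left _ hP0
    gcongr
  calc P i * ((φ i + β) ^ 2 / Ptail i) ≤ P i * (4 * β ^ 2 / Ptail i) := this
    _ = 4 * β ^ 2 * (P i / Ptail i) := by ring
end
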